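/- Fix m, n ≥ 2 and let ρ = diag(1, 0, …, 0) be the pure state on ℂ^{mn}. For t = (mn−1)/3 and σ = diag(0, 1/(mn−1), …, 1/(mn−1)), the sorted spectrum of (ρ + tσ)/(1+t) is (3/(mn+2), 1/(mn+2), …, 1/(mn+2)), which saturates the bound λ₁ = λ_{mn−1} + 2√(λ_{mn−2}λ_{mn}). Conversely, for any state μ with sorted diagonal entries μ₁ ≥ ⋯ ≥ μ_{mn} and any t > 3/(mn−1), the vector (μ_{mn} + t, (1−μ_{mn})/(mn−1), …, (1−μ_{mn})/(mn−1))/(1+t) violates the inequality λ₁ ≤ 3·λ₂ required for absolute PPT, i.e., μ_{mn} + t > 3(1−μ_{mn})/(mn−1). -/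
import Mathlib


/-- Exact robustness computation for the pure state `diag(1,0,…,0)` on `ℂ^{mn}`:
(1) mixing with `σ = diag(0, 1/(mn−1), …, 1/(mn−1))` at weight `t = (mn−1)/3` yields the
spectrum `(3/(mn+2), 1/(mn+2), …, 1/(mn+2))`;
(2) this spectrum saturates `λ₁ = λ_{mn−1} + 2√(λ_{mn−2}λ_{mn})`;
(3) conversely, for any sorted probability vector `μ` and any `t > 3/(mn−1)`,
`μ_{mn} + t > 3(1−μ_{mn})/(mn−1)`, i.e. the resulting spectrum violates the
absolute-PPT requirement `λ₁ ≤ 3λ₂` for two-valued spectra. -/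
theorem robustness_pure_state (m n : ℕ) (hm : 2 ≤ m) (hn : 2 ≤ n) :
    (∀ i : Fin (m * n),
      ((if i.val = 0 then (1 : ℝ) else 0) +
          ((m * n : ℝ) - 1) / 3 * (if i.val = 0 then 0 else 1 / ((m * n : ℝ) - 1))) /
        (1 + ((m * n : ℝ) - 1) / 3) =
      if i.val = 0 then 3 / ((m * n : ℝ) + 2) else 1 / ((m * n : ℝ) + 2)) ∧
    (3 / ((m * n : ℝ) + 2) =
      1 / ((m * n : ℝ) + 2) +
        2 * Real.sqrt ((1 / ((m * n : ℝ) + 2)) * (1 / ((m * n : ℝ) + 2)))) ∧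
    (∀ μ : Fin (m * n) → ℝ,
      (∀ i j : Fin (m * n), i ≤ j → μ j ≤ μ i) → (∀ i, 0 ≤ μ i) → (∑ i, μ i) = 1 →
      ∀ t : ℝ, t > 3 / ((m * n : ℝ) - 1) →
        μ ⟨m * n - 1, Nat.sub_lt (Nat.mul_pos (by omega) (by omega)) one_pos⟩ + t >
          3 * (1 - μ ⟨m * n - 1, Nat.sub_lt (Nat.mul_pos (by omega) (by omega)) one_pos⟩) /
            ((m * n : ℝ) - 1)) := by
  have hN : (4 : ℕ) ≤ m * n := le_trans (by norm_num) (Nat.mul_le_mul hm hn)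
  have hNR : (4 : ℝ) ≤ (m * n : ℝ) := by exact_mod_cast hN
  have h1 : (0 : ℝ) < (m * n : ℝ) - 1 := by linarith
  have h2 : (0 : ℝ) < (m * n : ℝ) + 2 := by linarith
  refine ⟨?_, ?_, ?_⟩
  · intro i
    by_cases h : i.val = 0 <;> simp [h] <;> field_simp <;> ring
  · rw [Real.sqrt_mul_self (by positivity : (0:ℝ) ≤ 1 / ((m*n:ℝ)+2))]
    field_simp
    ring
  · intro μ _ hpos _ t ht
    set x := μ ⟨m * n - 1, Nat.sub_lt (Nat.mul_pos (by omega) (by omega)) one_pos⟩ with hx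
    have hx0 : 0 ≤ x := hpos _
    have key : 3 * (1 - x) / ((m * n : ℝ) - 1) ≤ 3 / ((m * n : ℝ) - 1) := by
      gcongr
      linarith
    calc 3 * (1 - x) / ((m * n : ℝ) - 1) ≤ 3 / ((m * n : ℝ) - 1) := key
      _ < t := ht
      _ ≤ x + t := by linarith
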